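/- Let X, Y be real reflexive Banach spaces (the canonical embedding of each into its double dual is surjective), with Y smooth (for every unit vector y ∈ Y there is a unique continuous linear functional f with ‖f‖ = 1 and f(y) = 1) and strictly convex. Let A, B : X → Y be compact linear operators, and suppose that M_A is a connected subset of X or that M_A = {−u, u} for some unit vector u ∈ X. Then the following are equivalent: (i) A is norm-parallel to B; (ii) there exists a vector x ∈ M_A ∩ M_B such that Ax is norm-parallel to Bx. Moreover, if A ≠ 0, B ≠ 0 and x satisfies (ii), then ‖B‖·Ax = ‖A‖·Bx or ‖B‖·Ax = −‖A‖·Bx. -/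

import Mathlib

/-!
If `A + εB` attains its norm `‖A‖ + ‖B‖` at a unit vector `x`, the triangle inequality forces
`‖Ax‖ = ‖A‖`, `‖Bx‖ = ‖B‖` and `‖Ax + εBx‖ = ‖Ax‖ + ‖Bx‖`; conversely such an `x` witnesses
`‖A + εB‖ ≥ ‖A‖ + ‖B‖`. Compact operators on a reflexive space attain their norm: a maximizing
sequence has a weak cluster point along an ultrafilter (Banach–Alaoglu in the bidual), and a compact
operator turns weak convergence into norm convergence. In a strictly convex space
`‖u + εv‖ = ‖u‖ + ‖v‖` means that `u` and `εv` lie on the same ray, whence `‖v‖ • u = ±‖u‖ • v`.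
-/

open Filter Topology NormedSpace

section Reflexive

variable {X : Type*} [NormedAddCommGroup X] [NormedSpace ℝ X]

theorem exists_norm_le_one_forall_dual_tendsto
    (hX : Function.Surjective (inclusionInDoubleDual ℝ X)) {ι : Type*} (𝒰 : Ultrafilter ι)
    (u : ι → X) (hu : ∀ i, ‖u i‖ ≤ 1) :
    ∃ x : X, ‖x‖ ≤ 1 ∧ ∀ f : StrongDual ℝ X, Tendsto (fun i ↦ f (u i)) 𝒰 (𝓝 (f x)) := by
  have hnorm (z : X) : ‖inclusionInDoubleDual ℝ X z‖ = ‖z‖ :=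
    (inclusionInDoubleDualLi ℝ).norm_map z
  let φ : ι → WeakDual ℝ (StrongDual ℝ X) :=
    fun i ↦ StrongDual.toWeakDual (inclusionInDoubleDual ℝ X (u i))
  have hφ : ∀ᶠ i in 𝒰, φ i ∈ WeakDual.toStrongDual ⁻¹' Metric.closedBall 0 1 :=
    Eventually.of_forall fun i ↦
      (mem_closedBall_zero_iff (E := StrongDual ℝ (StrongDual ℝ X))).2 ((hnorm _).trans_le (hu i))
  obtain ⟨ψ, hψ, hφψ⟩ := (WeakDual.isCompact_closedBall 0 1).ultrafilter_le_nhds'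
    (Ultrafilter.map φ 𝒰) hφ
  obtain ⟨x, hx⟩ := hX (WeakDual.toStrongDual ψ)
  refine ⟨x, ?_, fun f ↦ ?_⟩
  · rw [← hnorm, hx]
    exact (mem_closedBall_zero_iff (E := StrongDual ℝ (StrongDual ℝ X))).1 hψ
  · have := ((WeakDual.eval_continuous f).tendsto ψ).comp hφψ
    rwa [show ψ f = f x from congrArg (· f) hx.symm] at this

variable {Y : Type*} [NormedAddCommGroup Y] [NormedSpace ℝ Y]

theorem IsCompactOperator.tendsto_of_forall_dual_tendsto {T : X →L[ℝ] Y}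
    (hT : IsCompactOperator T) {ι : Type*} {𝒰 : Ultrafilter ι} {u : ι → X} {r : ℝ}
    (hu : ∀ i, ‖u i‖ ≤ r) {x : X}
    (hux : ∀ f : StrongDual ℝ X, Tendsto (fun i ↦ f (u i)) 𝒰 (𝓝 (f x))) :
    Tendsto (fun i ↦ T (u i)) 𝒰 (𝓝 (T x)) := by
  have hK : ∀ᶠ i in 𝒰, T (u i) ∈ closure (T '' Metric.closedBall 0 r) :=
    Eventually.of_forall fun i ↦ subset_closure ⟨u i, mem_closedBall_zero_iff.2 (hu i), rfl⟩
  obtain ⟨y, -, hy⟩ := (hT.isCompact_closure_image_closedBall r).ultrafilter_le_nhds'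
    (Ultrafilter.map (fun i ↦ T (u i)) 𝒰) hK
  suffices y = T x from this ▸ hy
  refine (SeparatingDual.eq_iff_forall_dual_eq (R := ℝ)).2 fun g ↦ ?_
  exact tendsto_nhds_unique ((g.continuous.tendsto y).comp hy) (hux (g.comp T))

theorem IsCompactOperator.exists_norm_le_one_norm_apply_eq_opNorm
    (hX : Function.Surjective (inclusionInDoubleDual ℝ X)) {T : X →L[ℝ] Y}
    (hT : IsCompactOperator T) : ∃ x : X, ‖x‖ ≤ 1 ∧ ‖T x‖ = ‖T‖ := by
  have hseq (n : ℕ) : ∃ x : X, ‖x‖ < 1 ∧ ‖T‖ - 1 / (n + 1) < ‖T x‖ :=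
    T.exists_lt_apply_of_lt_opNorm (sub_lt_self _ Nat.one_div_pos_of_nat)
  choose u hu hTu using hseq
  have hmax : Tendsto (fun n ↦ ‖T (u n)‖) atTop (𝓝 ‖T‖) := by
    refine tendsto_of_tendsto_of_tendsto_of_le_of_le ?_ tendsto_const_nhds
      (fun n ↦ (hTu n).le) (fun n ↦ T.unit_le_opNorm _ (hu n).le)
    simpa using tendsto_const_nhds.sub (tendsto_one_div_add_atTop_nhds_zero_nat (𝕜 := ℝ))
  let 𝒰 := Ultrafilter.of (atTop : Filter ℕ)
  obtain ⟨x, hx, hux⟩ := exists_norm_le_one_forall_dual_tendsto hX 𝒰 u fun n ↦ (hu n).le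
  have hTux := hT.tendsto_of_forall_dual_tendsto (fun n ↦ (hu n).le) hux
  exact ⟨x, hx, tendsto_nhds_unique hTux.norm (hmax.mono_left (Ultrafilter.of_le _))⟩

theorem IsCompactOperator.exists_norm_eq_one_norm_apply_eq_opNorm [Nontrivial X]
    (hX : Function.Surjective (inclusionInDoubleDual ℝ X)) {T : X →L[ℝ] Y}
    (hT : IsCompactOperator T) : ∃ x : X, ‖x‖ = 1 ∧ ‖T x‖ = ‖T‖ := by
  obtain ⟨x, hx, hTx⟩ := hT.exists_norm_le_one_norm_apply_eq_opNorm hX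
  rcases eq_or_ne T 0 with rfl | hT0
  · obtain ⟨z, hz⟩ := exists_norm_eq X zero_le_one
    exact ⟨z, hz, by simp⟩
  refine ⟨x, le_antisymm hx ?_, hTx⟩
  have := T.le_opNorm x
  rw [hTx] at this
  exact (le_mul_iff_one_le_right (norm_pos_iff.2 hT0)).1 this

end Reflexive

section NormParallel

variable {E : Type*} [NormedAddCommGroup E] [NormedSpace ℝ E]

def NormParallel (u v : E) : Prop :=
  ∃ ε : ℝ, (ε = 1 ∨ ε = -1) ∧ ‖u + ε • v‖ = ‖u‖ + ‖v‖

theorem norm_smul_of_eq_one_or_eq_neg_one {F : Type*} [Norm F] [SMul ℝ F]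
    [NormSMulClass ℝ F] {ε : ℝ} (hε : ε = 1 ∨ ε = -1) (v : F) :
    ‖ε • v‖ = ‖v‖ := by
  rcases hε with rfl | rfl <;> simp [norm_smul]

theorem NormParallel.norm_smul_eq_or_norm_smul_eq_neg [StrictConvexSpace ℝ E] {u v : E}
    (h : NormParallel u v) : ‖v‖ • u = ‖u‖ • v ∨ ‖v‖ • u = -(‖u‖ • v) := by
  obtain ⟨ε, hε | hε, huv⟩ := h <;> subst hε
  · left
    rw [one_smul, ← sameRay_iff_norm_add] at huv
    exact huv.norm_smul_eq.symm
  · right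
    rw [neg_one_smul, ← norm_neg v, ← sameRay_iff_norm_add] at huv
    rw [← norm_neg v, ← huv.norm_smul_eq, smul_neg]

end NormParallel

namespace ContinuousLinearMap

variable {X Y : Type*} [NormedAddCommGroup X] [NormedSpace ℝ X]
  [NormedAddCommGroup Y] [NormedSpace ℝ Y]

theorem normParallel_of_normParallel_apply {A B : X →L[ℝ] Y} {x : X} (hx : ‖x‖ ≤ 1)
    (hAx : ‖A x‖ = ‖A‖) (hBx : ‖B x‖ = ‖B‖) (h : NormParallel (A x) (B x)) :
    NormParallel A B := by
  obtain ⟨ε, hε, hABx⟩ := h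
  refine ⟨ε, hε, le_antisymm ?_ ?_⟩
  · calc ‖A + ε • B‖ ≤ ‖A‖ + ‖ε • B‖ := norm_add_le _ _
      _ = ‖A‖ + ‖B‖ := by rw [norm_smul_of_eq_one_or_eq_neg_one hε]
  · calc ‖A‖ + ‖B‖ = ‖(A + ε • B) x‖ := by rw [← hAx, ← hBx, ← hABx]; simp
      _ ≤ ‖A + ε • B‖ := (A + ε • B).unit_le_opNorm x hx

theorem exists_normParallel_apply_of_normParallel [Nontrivial X]
    (hX : Function.Surjective (inclusionInDoubleDual ℝ X)) {A B : X →L[ℝ] Y}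
    (hA : IsCompactOperator A) (hB : IsCompactOperator B) (h : NormParallel A B) :
    ∃ x : X, (‖x‖ = 1 ∧ ‖A x‖ = ‖A‖) ∧ ‖B x‖ = ‖B‖ ∧ NormParallel (A x) (B x) := by
  obtain ⟨ε, hε, hAB⟩ := h
  have hT : IsCompactOperator (A + ε • B) := hA.add (hB.smul ε)
  obtain ⟨x, hx, hTx⟩ := hT.exists_norm_eq_one_norm_apply_eq_opNorm hX
  have hTx' : ‖A x + ε • B x‖ = ‖A‖ + ‖B‖ := by rw [← hAB, ← hTx]; simp
  have hsum : ‖A‖ + ‖B‖ ≤ ‖A x‖ + ‖B x‖ := by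
    grw [← hTx', norm_add_le, norm_smul_of_eq_one_or_eq_neg_one hε]
  have hAx : ‖A x‖ = ‖A‖ := by linarith [A.unit_le_opNorm x hx.le, B.unit_le_opNorm x hx.le]
  have hBx : ‖B x‖ = ‖B‖ := by linarith [A.unit_le_opNorm x hx.le, B.unit_le_opNorm x hx.le]
  exact ⟨x, ⟨hx, hAx⟩, hBx, ε, hε, by rw [hTx', hAx, hBx]⟩

theorem normParallel_iff_exists_normParallel_apply [Nontrivial X]
    (hX : Function.Surjective (inclusionInDoubleDual ℝ X)) {A B : X →L[ℝ] Y}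
    (hA : IsCompactOperator A) (hB : IsCompactOperator B) :
    NormParallel A B ↔
      ∃ x : X, (‖x‖ = 1 ∧ ‖A x‖ = ‖A‖) ∧ ‖B x‖ = ‖B‖ ∧ NormParallel (A x) (B x) :=
  ⟨exists_normParallel_apply_of_normParallel hX hA hB, fun ⟨_, ⟨hx, hAx⟩, hBx, h⟩ ↦
    normParallel_of_normParallel_apply hx.le hAx hBx h⟩

end ContinuousLinearMap

theorem compact_parallel_iff_pointwise_parallel_general
    {X Y : Type*} [NormedAddCommGroup X] [NormedSpace ℝ X]
    [NormedAddCommGroup Y] [NormedSpace ℝ Y] [StrictConvexSpace ℝ Y]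
    (hXrefl : Function.Surjective (NormedSpace.inclusionInDoubleDual ℝ X))
    (A B : X →L[ℝ] Y) (hA : IsCompactOperator A) (hB : IsCompactOperator B)
    (hMA : IsConnected {x : X | ‖x‖ = 1 ∧ ‖A x‖ = ‖A‖} ∨
      ∃ u : X, ‖u‖ = 1 ∧ {x : X | ‖x‖ = 1 ∧ ‖A x‖ = ‖A‖} = {-u, u}) :
    ((∃ ε : ℝ, (ε = 1 ∨ ε = -1) ∧ ‖A + ε • B‖ = ‖A‖ + ‖B‖) ↔
      ∃ x : X, (‖x‖ = 1 ∧ ‖A x‖ = ‖A‖) ∧ ‖B x‖ = ‖B‖ ∧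
        ∃ ε : ℝ, (ε = 1 ∨ ε = -1) ∧ ‖A x + ε • B x‖ = ‖A x‖ + ‖B x‖) ∧
    (A ≠ 0 → B ≠ 0 → ∀ x : X, ‖x‖ = 1 → ‖A x‖ = ‖A‖ → ‖B x‖ = ‖B‖ →
      (∃ ε : ℝ, (ε = 1 ∨ ε = -1) ∧ ‖A x + ε • B x‖ = ‖A x‖ + ‖B x‖) →
      (‖B‖ • A x = ‖A‖ • B x ∨ ‖B‖ • A x = -(‖A‖ • B x))) := by
  -- On `X = 0` the operators `0, 0` are parallel, yet there is no unit vector.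
  obtain ⟨u, hu⟩ : ∃ u : X, ‖u‖ = 1 := by
    rcases hMA with hconn | ⟨u, hu, -⟩
    · exact hconn.nonempty.imp fun _ hx ↦ hx.1
    · exact ⟨u, hu⟩
  have : Nontrivial X := ⟨u, 0, ne_zero_of_norm_ne_zero (by simp [hu])⟩
  refine ⟨ContinuousLinearMap.normParallel_iff_exists_normParallel_apply hXrefl hA hB,
    fun _ _ x _ hAx hBx h ↦ ?_⟩
  rw [← hAx, ← hBx]
  exact NormParallel.norm_smul_eq_or_norm_smul_eq_neg h

theorem compact_parallel_iff_pointwise_parallel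
    {X Y : Type*} [NormedAddCommGroup X] [NormedSpace ℝ X] [CompleteSpace X]
    [NormedAddCommGroup Y] [NormedSpace ℝ Y] [CompleteSpace Y] [StrictConvexSpace ℝ Y]
    (hXrefl : Function.Surjective (NormedSpace.inclusionInDoubleDual ℝ X))
    (hYrefl : Function.Surjective (NormedSpace.inclusionInDoubleDual ℝ Y))
    (hsm : ∀ u : Y, ‖u‖ = 1 → ∃! f : Y →L[ℝ] ℝ, ‖f‖ = 1 ∧ f u = 1)
    (A B : X →L[ℝ] Y) (hA : IsCompactOperator A) (hB : IsCompactOperator B)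
    (hMA : IsConnected {x : X | ‖x‖ = 1 ∧ ‖A x‖ = ‖A‖} ∨
      ∃ u : X, ‖u‖ = 1 ∧ {x : X | ‖x‖ = 1 ∧ ‖A x‖ = ‖A‖} = {-u, u}) :
    ((∃ ε : ℝ, (ε = 1 ∨ ε = -1) ∧ ‖A + ε • B‖ = ‖A‖ + ‖B‖) ↔
      ∃ x : X, (‖x‖ = 1 ∧ ‖A x‖ = ‖A‖) ∧ ‖B x‖ = ‖B‖ ∧
        ∃ ε : ℝ, (ε = 1 ∨ ε = -1) ∧ ‖A x + ε • B x‖ = ‖A x‖ + ‖B x‖) ∧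
    (A ≠ 0 → B ≠ 0 → ∀ x : X, ‖x‖ = 1 → ‖A x‖ = ‖A‖ → ‖B x‖ = ‖B‖ →
      (∃ ε : ℝ, (ε = 1 ∨ ε = -1) ∧ ‖A x + ε • B x‖ = ‖A x‖ + ‖B x‖) →
      (‖B‖ • A x = ‖A‖ • B x ∨ ‖B‖ • A x = -(‖A‖ • B x))) :=
  compact_parallel_iff_pointwise_parallel_general hXrefl A B hA hB hMA
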